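/- Let s > 0, let c_L, y₀ be real numbers with (1 − 1/s)² − 4c_L/s > 0, set Ξ = √((1 − 1/s)² − 4c_L/s), and assume |2y₀ − (1 − 1/s)| < Ξ. Let t₁ < t₂, let Ψ : ℝ → ℝ be a continuous function with Ψ(t) ≥ c_L for all t ∈ [t₁, t₂], and let y : ℝ → ℝ be differentiable on [t₁, t₂] with y(t₁) = y₀ and y′(t) = (s − 1)·y(t) − s·y(t)² − Ψ(t) for all t ∈ [t₁, t₂]. Then y(t) ≤ T(t − t₁ | y₀, s, c_L) for all t ∈ [t₁, t₂], where T is the tanh-formula with parameters (y₀, s, c_L). -/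

import Mathlib

/-!
Both `y` and `T(· - t₁)` solve the Riccati equation, with forcings `Ψ` and `c_L ≤ Ψ`, and
start at `y₀`. Their difference `g` satisfies `g' = L g - (Ψ - c_L) ≤ L g`, where
`L = (s - 1) - s (y + T)` is bounded above by some `K` on `[t₁, t₂]`. So wherever `g > 0` it grows
at most like `e^{K t}`, and fencing `g` by `δ e^{(K + 1) t}` for every `δ > 0` shows `g ≤ 0`.
-/

/-- The real inverse hyperbolic tangent, `arctanh x = ½ log((1+x)/(1-x))`,
defined for `x ∈ (-1, 1)`. -/
noncomputable def arctanh (x : ℝ) : ℝ := (1 / 2) * Real.log ((1 + x) / (1 - x))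

/-- The tanh-formula `T(t | y₀, s, c)`. -/
noncomputable def tanhFormula (y₀ s c t : ℝ) : ℝ :=
  (1 / 2) * (1 - 1 / s) +
    (Real.sqrt ((1 - 1 / s) ^ 2 - 4 * c / s) / 2) *
      Real.tanh ((s * Real.sqrt ((1 - 1 / s) ^ 2 - 4 * c / s) / 2) * t +
        arctanh ((2 * y₀ - (1 - 1 / s)) / Real.sqrt ((1 - 1 / s) ^ 2 - 4 * c / s)))

open Set

theorem Real.hasDerivAt_tanh (x : ℝ) : HasDerivAt Real.tanh (1 - Real.tanh x ^ 2) x := by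
  have hcosh := (Real.cosh_pos x).ne'
  have h : HasDerivAt (fun z => Real.sinh z / Real.cosh z) _ x :=
    (Real.hasDerivAt_sinh x).div (Real.hasDerivAt_cosh x) hcosh
  rw [show Real.tanh = fun z => Real.sinh z / Real.cosh z from
    funext Real.tanh_eq_sinh_div_cosh]
  convert h using 1
  beta_reduce
  field_simp

theorem arctanh_eq_artanh {x : ℝ} (hx : x ∈ Icc (-1) 1) : arctanh x = Real.artanh x :=
  (Real.artanh_eq_half_log hx).symm

theorem tanhFormula_zero {y₀ s c : ℝ}
    (hy₀ : |2 * y₀ - (1 - 1 / s)| < Real.sqrt ((1 - 1 / s) ^ 2 - 4 * c / s)) :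
    tanhFormula y₀ s c 0 = y₀ := by
  set Ξ := Real.sqrt ((1 - 1 / s) ^ 2 - 4 * c / s)
  have hΞ : 0 < Ξ := (abs_nonneg _).trans_lt hy₀
  have hx : (2 * y₀ - (1 - 1 / s)) / Ξ ∈ Ioo (-1) 1 := by
    rw [mem_Ioo, ← abs_lt, abs_div, abs_of_pos hΞ, div_lt_one hΞ]
    exact hy₀
  rw [tanhFormula, mul_zero, zero_add, arctanh_eq_artanh (Ioo_subset_Icc_self hx),
    Real.tanh_artanh hx]
  field_simp
  ring

theorem hasDerivAt_tanhFormula {s c : ℝ} (y₀ : ℝ) (hs : s ≠ 0)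
    (hdisc : 0 ≤ (1 - 1 / s) ^ 2 - 4 * c / s) (t : ℝ) :
    HasDerivAt (tanhFormula y₀ s c)
      ((s - 1) * tanhFormula y₀ s c t - s * tanhFormula y₀ s c t ^ 2 - c) t := by
  set m := 1 - 1 / s with hm
  set Ξ := Real.sqrt (m ^ 2 - 4 * c / s)
  set Ω := arctanh ((2 * y₀ - m) / Ξ)
  have hsm : s * m = s - 1 := by rw [hm]; field_simp
  have hsΞ : s * Ξ ^ 2 = s * m ^ 2 - 4 * c := by
    rw [Real.sq_sqrt hdisc]; field_simp
  have hlin : HasDerivAt (fun t => s * Ξ / 2 * t + Ω) (s * Ξ / 2) t := by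
    simpa using ((hasDerivAt_id t).const_mul (s * Ξ / 2)).add_const Ω
  have hT : HasDerivAt (tanhFormula y₀ s c)
      (Ξ / 2 * ((1 - Real.tanh (s * Ξ / 2 * t + Ω) ^ 2) * (s * Ξ / 2))) t :=
    (((Real.hasDerivAt_tanh _).comp t hlin).const_mul (Ξ / 2)).const_add (1 / 2 * m)
  convert hT using 1
  rw [show tanhFormula y₀ s c t = 1 / 2 * m + Ξ / 2 * Real.tanh (s * Ξ / 2 * t + Ω) from rfl]
  linear_combination (-(m / 2 + Ξ / 2 * Real.tanh (s * Ξ / 2 * t + Ω))) * hsm - 1 / 4 * hsΞ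

theorem image_nonpos_of_deriv_right_le_mul_of_pos {g g' : ℝ → ℝ} {a b K : ℝ}
    (hg : ContinuousOn g (Icc a b)) (hg' : ∀ x ∈ Ico a b, HasDerivWithinAt g (g' x) (Ici x) x)
    (ha : g a ≤ 0) (bound : ∀ x ∈ Ico a b, 0 < g x → g' x ≤ K * g x) :
    ∀ ⦃x⦄, x ∈ Icc a b → g x ≤ 0 := by
  intro x hx
  refine le_of_forall_pos_le_add fun δ hδ => ?_
  set B : ℝ → ℝ := fun t => δ * Real.exp ((K + 1) * (t - x))
  have hBpos : ∀ t, 0 < B t := fun t => by positivity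
  have hB : ∀ t, HasDerivAt B ((K + 1) * B t) t := fun t => by
    have := ((((hasDerivAt_id t).sub_const x).const_mul (K + 1)).exp).const_mul δ
    exact this.congr_deriv (by simp only [B, id]; ring)
  have hfence := image_le_of_deriv_right_lt_deriv_boundary hg hg' (ha.trans (hBpos a).le) hB
    (fun t ht hgB => by
      have hg't := bound t ht (hgB ▸ hBpos t)
      rw [hgB] at hg't
      linarith [hBpos t]) hx
  simpa [B] using hfence

theorem riccati_comparison {s a b : ℝ} {y z Ψ φ : ℝ → ℝ}
    (hy : ∀ t ∈ Icc a b, HasDerivWithinAt y ((s - 1) * y t - s * y t ^ 2 - Ψ t) (Icc a b) t)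
    (hz : ∀ t ∈ Icc a b, HasDerivWithinAt z ((s - 1) * z t - s * z t ^ 2 - φ t) (Icc a b) t)
    (hφΨ : ∀ t ∈ Icc a b, φ t ≤ Ψ t) (ha : y a ≤ z a) :
    ∀ ⦃t⦄, t ∈ Icc a b → y t ≤ z t := by
  have hycont : ContinuousOn y (Icc a b) := fun t ht => (hy t ht).continuousWithinAt
  have hzcont : ContinuousOn z (Icc a b) := fun t ht => (hz t ht).continuousWithinAt
  set L : ℝ → ℝ := fun t => (s - 1) - s * (y t + z t)
  obtain ⟨K, hK⟩ := isCompact_Icc.bddAbove_image (f := L)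
    (continuousOn_const.sub (continuousOn_const.mul (hycont.add hzcont)))
  have hderiv : ∀ t ∈ Ico a b, HasDerivWithinAt (fun t => y t - z t)
      ((s - 1) * y t - s * y t ^ 2 - Ψ t - ((s - 1) * z t - s * z t ^ 2 - φ t)) (Ici t) t :=
    fun t ht => ((hy t (Ico_subset_Icc_self ht)).sub
      (hz t (Ico_subset_Icc_self ht))).mono_of_mem_nhdsWithin (Icc_mem_nhdsGE_of_mem ht)
  have hbound : ∀ x ∈ Ico a b, 0 < y x - z x →
      (s - 1) * y x - s * y x ^ 2 - Ψ x - ((s - 1) * z x - s * z x ^ 2 - φ x) ≤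
        K * (y x - z x) := fun x hx hpos => by
    have hLK : L x ≤ K := hK (mem_image_of_mem L (Ico_subset_Icc_self hx))
    have hφΨx := hφΨ x (Ico_subset_Icc_self hx)
    calc _ = L x * (y x - z x) - (Ψ x - φ x) := by ring
      _ ≤ K * (y x - z x) := by linarith [mul_le_mul_of_nonneg_right hLK hpos.le]
  intro t ht
  exact sub_nonpos.mp <| image_nonpos_of_deriv_right_le_mul_of_pos (hycont.sub hzcont) hderiv
    (sub_nonpos.mpr ha) hbound ht

theorem prevalence_upper_bound_general (s cL y₀ t₁ t₂ : ℝ) (hs : 0 < s)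
    (hdisc : 0 < (1 - 1 / s) ^ 2 - 4 * cL / s)
    (hy₀ : |2 * y₀ - (1 - 1 / s)| < Real.sqrt ((1 - 1 / s) ^ 2 - 4 * cL / s))
    (Ψ : ℝ → ℝ)
    (hΨ : ∀ t ∈ Set.Icc t₁ t₂, cL ≤ Ψ t)
    (y : ℝ → ℝ) (hinit : y t₁ = y₀)
    (hode : ∀ t ∈ Set.Icc t₁ t₂,
      HasDerivWithinAt y ((s - 1) * y t - s * (y t) ^ 2 - Ψ t) (Set.Icc t₁ t₂) t) :
    ∀ t ∈ Set.Icc t₁ t₂, y t ≤ tanhFormula y₀ s cL (t - t₁) := by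
  have hT : ∀ t ∈ Icc t₁ t₂, HasDerivWithinAt (fun t => tanhFormula y₀ s cL (t - t₁))
      ((s - 1) * tanhFormula y₀ s cL (t - t₁) - s * tanhFormula y₀ s cL (t - t₁) ^ 2 - cL)
      (Icc t₁ t₂) t := fun t _ =>
    ((hasDerivAt_tanhFormula y₀ hs.ne' hdisc.le (t - t₁)).comp_sub_const t t₁).hasDerivWithinAt
  intro t ht
  refine riccati_comparison hode (φ := fun _ => cL) hT hΨ ?_ ht
  rw [hinit, sub_self, tanhFormula_zero hy₀]

/-- If the remainder `Ψ` is bounded below by `c_L` on `[t₁, t₂]` and `y` solves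
`y' = (s-1)y - sy² - Ψ(t)` there with `y(t₁) = y₀`, then
`y(t) ≤ T(t - t₁ | y₀, s, c_L)` on `[t₁, t₂]`. -/
theorem prevalence_upper_bound (s cL y₀ t₁ t₂ : ℝ) (hs : 0 < s)
    (hdisc : 0 < (1 - 1 / s) ^ 2 - 4 * cL / s)
    (hy₀ : |2 * y₀ - (1 - 1 / s)| < Real.sqrt ((1 - 1 / s) ^ 2 - 4 * cL / s))
    (ht : t₁ < t₂) (Ψ : ℝ → ℝ) (hΨcont : Continuous Ψ)
    (hΨ : ∀ t ∈ Set.Icc t₁ t₂, cL ≤ Ψ t)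
    (y : ℝ → ℝ) (hinit : y t₁ = y₀)
    (hode : ∀ t ∈ Set.Icc t₁ t₂,
      HasDerivWithinAt y ((s - 1) * y t - s * (y t) ^ 2 - Ψ t) (Set.Icc t₁ t₂) t) :
    ∀ t ∈ Set.Icc t₁ t₂, y t ≤ tanhFormula y₀ s cL (t - t₁) :=
  prevalence_upper_bound_general s cL y₀ t₁ t₂ hs hdisc hy₀ Ψ hΨ y hinit hode
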